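/- Let $\varsigma, \sigma, \bar\sigma, \tau$ be positive definite $d\times d$ matrices, $\beta$ invertible, with $\varsigma = \bar\sigma^{1/2} r\, \bar\sigma^{1/2}$ where $r$ is positive definite satisfying $r\varpi^{-1}r + r = I$ with $\varpi^{-1} = \gamma\gamma'$ and $\gamma = \bar\sigma^{1/2}\tau^{-1}\beta\sigma^{1/2}$. Then $(\varsigma\tau^{-1}\beta)\,\sigma\,(\varsigma\tau^{-1}\beta)' + \varsigma = \bar\sigma$. -/

import Mathlib

open Matrix

open scoped ComplexOrder in
/-- The positive semidefinite square root of a positive semidefinite matrix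
(the definition `Matrix.PosSemidef.sqrt` of Mathlib, December 2024, removed since). -/
noncomputable def Matrix.PosSemidef.sqrt {n 𝕜 : Type*} [RCLike 𝕜] [Fintype n] [DecidableEq n]
    {A : Matrix n n 𝕜} (hA : A.PosSemidef) : Matrix n n 𝕜 :=
  hA.1.eigenvectorUnitary.1 * diagonal ((↑) ∘ (√·) ∘ hA.1.eigenvalues) *
    (star hA.1.eigenvectorUnitary : Matrix n n 𝕜)

open scoped ComplexOrder in
theorem Matrix.PosSemidef.sqrt_isHermitian {n 𝕜 : Type*} [RCLike 𝕜] [Fintype n] [DecidableEq n]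
    {A : Matrix n n 𝕜} (hA : A.PosSemidef) : hA.sqrt.IsHermitian := by
  unfold Matrix.PosSemidef.sqrt
  simp only [IsHermitian, conjTranspose_mul, diagonal_conjTranspose, Matrix.star_eq_conjTranspose,
    conjTranspose_conjTranspose, mul_assoc]
  congr 3
  funext i
  simp

open scoped ComplexOrder in
theorem Matrix.PosSemidef.sqrt_mul_self {n 𝕜 : Type*} [RCLike 𝕜] [Fintype n] [DecidableEq n]
    {A : Matrix n n 𝕜} (hA : A.PosSemidef) : hA.sqrt * hA.sqrt = A := by
  have hspec := hA.1.spectral_theorem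
  rw [Unitary.conjStarAlgAut_apply] at hspec
  unfold Matrix.PosSemidef.sqrt
  conv_rhs => rw [hspec]
  have hU : (star hA.1.eigenvectorUnitary : Matrix n n 𝕜) * hA.1.eigenvectorUnitary.1 = 1 :=
    Unitary.coe_star_mul_self _
  rw [show ∀ a b c d e f : Matrix n n 𝕜, a * b * c * (d * e * f) = a * b * (c * d) * e * f by
    intros; simp only [mul_assoc], hU, mul_one, mul_assoc _ (diagonal _) (diagonal _), diagonal_mul_diagonal]
  congr 3
  funext i
  simp only [Function.comp_apply]
  rw [← RCLike.ofReal_mul, Real.mul_self_sqrt (hA.eigenvalues_nonneg i)]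


/-- Transport property of the Gaussian Schrödinger bridge map: with
`γ = σ̄^{1/2} τ⁻¹ β σ^{1/2}`, `ς = σ̄^{1/2} r σ̄^{1/2}` and `r` positive definite
satisfying `r (γγᵀ) r + r = I` (i.e. `r ϖ⁻¹ r + r = I` with `ϖ⁻¹ = γγᵀ`), one has
`(ς τ⁻¹ β) σ (ς τ⁻¹ β)ᵀ + ς = σ̄`. -/
theorem schrodinger_bridge_transport {d : ℕ}
    (σ σbar τ β r : Matrix (Fin d) (Fin d) ℝ)
    (hσ : σ.PosDef) (hσbar : σbar.PosDef) (hτ : τ.PosDef) (hr : r.PosDef)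
    (hβ : IsUnit β.det)
    (hfix : r * (hσbar.posSemidef.sqrt * τ⁻¹ * β * hσ.posSemidef.sqrt *
        (hσbar.posSemidef.sqrt * τ⁻¹ * β * hσ.posSemidef.sqrt)ᵀ) * r + r = 1) :
    (hσbar.posSemidef.sqrt * r * hσbar.posSemidef.sqrt * τ⁻¹ * β) * σ *
        (hσbar.posSemidef.sqrt * r * hσbar.posSemidef.sqrt * τ⁻¹ * β)ᵀ +
      hσbar.posSemidef.sqrt * r * hσbar.posSemidef.sqrt = σbar := by
  set S := hσbar.posSemidef.sqrt with hSdef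
  set Q := hσ.posSemidef.sqrt with hQdef
  have hS : Sᵀ = S := by simpa [Matrix.IsSymm] using hσbar.posSemidef.sqrt_isHermitian
  have hQ : Qᵀ = Q := by simpa [Matrix.IsSymm] using hσ.posSemidef.sqrt_isHermitian
  have hr' : rᵀ = r := by simpa [Matrix.IsSymm] using hr.isHermitian
  have hSS : S * S = σbar := hσbar.posSemidef.sqrt_mul_self
  have hQQ : Q * Q = σ := hσ.posSemidef.sqrt_mul_self
  have key := congrArg (fun M => S * M * S) hfix
  simp only [mul_one] at key
  rw [hSS] at key
  rw [← key, ← hQQ]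
  simp only [transpose_mul, hS, hQ, hr']
  noncomm_ring
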